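/- The Hessian-free force-gradient update p' = p − b h ∇V(q − (2c h²/b)∇V(q)), q' = q agrees with the exact force-gradient update p'' = p − b h ∇V(q) + 2 c h³ ∇²V(q)·∇V(q), q'' = q up to O(h⁵): ‖p' − p''‖ ≤ C h⁵ for h in a neighborhood of 0, with C depending on V and q but not on h. -/

import Mathlib

open InnerProductSpace Metric

/-- The Hessian-free force-gradient update
`p' = p − b h ∇V(q − (2ch²/b)∇V(q))` agrees with the exact force-gradient update
`p'' = p − b h ∇V(q) + 2 c h³ ∇²V(q)·∇V(q)` up to `O(h⁵)`:
`‖p' − p''‖ ≤ C |h|⁵` for `h` near `0`, with `C` independent of `h`. -/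
theorem hessian_free_update_order_h5 {d : ℕ}
    (V : EuclideanSpace ℝ (Fin d) → ℝ) (hV : ContDiff ℝ 3 V)
    (b c : ℝ) (hb : b ≠ 0) (q : EuclideanSpace ℝ (Fin d)) :
    ∃ C δ : ℝ, 0 < C ∧ 0 < δ ∧ ∀ h : ℝ, |h| < δ →
      ∀ p : EuclideanSpace ℝ (Fin d),
        ‖(p - (b * h) • gradient V (q - (2 * c * h ^ 2 / b) • gradient V q))
          - (p - (b * h) • gradient V q
              + (2 * c * h ^ 3) • fderiv ℝ (gradient V) q (gradient V q))‖
          ≤ C * |h| ^ 5 := by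
  set g : EuclideanSpace ℝ (Fin d) → EuclideanSpace ℝ (Fin d) := gradient V with hgdef
  have hg : ContDiff ℝ 2 g := by
    have h1 : ContDiff ℝ 2 (fderiv ℝ V) := hV.fderiv_right (by norm_num)
    exact ((toDual ℝ (EuclideanSpace ℝ (Fin d))).symm.contDiff).comp h1
  have hDg : ContDiff ℝ 1 (fderiv ℝ g) := hg.fderiv_right (by norm_num)
  obtain ⟨K, t, ht, hlip⟩ := hDg.contDiffAt.exists_lipschitzOnWith
  obtain ⟨ε, hε, hball⟩ := Metric.mem_nhds_iff.mp ht
  set a : ℝ := ‖g q‖ with ha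
  set A : ℝ := 2 * |c| / |b| * a with hA
  have hA0 : 0 ≤ A := by positivity
  set δ : ℝ := min 1 (Real.sqrt (ε / (A + 1))) with hδdef
  have hδ0 : 0 < δ := by
    apply lt_min one_pos
    apply Real.sqrt_pos.mpr
    positivity
  refine ⟨|b| * (K : ℝ) * A ^ 2 + 1, δ, by positivity, hδ0, fun h hh p => ?_⟩
  set s : ℝ := 2 * c * h ^ 2 / b with hs
  set x : EuclideanSpace ℝ (Fin d) := q - s • g q with hx
  have hr : ‖x - q‖ = A * h ^ 2 := by
    rw [hx]
    have : q - s • g q - q = -(s • g q) := by abel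
    rw [this, norm_neg, norm_smul, hA, hs, Real.norm_eq_abs]
    rw [abs_div, abs_mul, abs_mul]
    simp [abs_of_nonneg (sq_nonneg h), sq_abs]
    ring
  have hh2 : h ^ 2 < ε / (A + 1) := by
    have h1 : |h| < Real.sqrt (ε / (A + 1)) := lt_of_lt_of_le hh (min_le_right _ _)
    have := Real.sq_sqrt (le_of_lt (by positivity : (0:ℝ) < ε / (A + 1)))
    calc h ^ 2 = |h| ^ 2 := (sq_abs h).symm
      _ < Real.sqrt (ε / (A + 1)) ^ 2 := by
          apply pow_lt_pow_left₀ h1 (abs_nonneg h); norm_num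
      _ = ε / (A + 1) := this
  have hrε : ‖x - q‖ < ε := by
    rw [hr]
    calc A * h ^ 2 ≤ A * (ε / (A + 1)) := by
          apply mul_le_mul_of_nonneg_left (le_of_lt hh2) hA0
      _ < ε := by
          rw [div_eq_inv_mul, ← mul_assoc]
          have : A * (A + 1)⁻¹ < 1 := by
            rw [mul_inv_lt_iff₀ (by positivity)]
            linarith
          nlinarith
  have hxball : x ∈ ball q ε := by rwa [mem_ball, dist_eq_norm]
  have hqball : q ∈ ball q ε := mem_ball_self hε
  have hseg : segment ℝ q x ⊆ ball q ε :=
    (convex_ball q ε).segment_subset hqball hxball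
  -- Taylor estimate
  have key : ‖g x - g q - fderiv ℝ g q (x - q)‖ ≤ (K : ℝ) * ‖x - q‖ * ‖x - q‖ := by
    apply Convex.norm_image_sub_le_of_norm_hasFDerivWithin_le'
      (f' := fderiv ℝ g) (s := segment ℝ q x)
    · intro z hz
      exact ((hg.differentiable (by norm_num)) z).hasFDerivAt.hasFDerivWithinAt
    · intro z hz
      have hz' : ‖z - q‖ ≤ ‖x - q‖ := by
        have : z ∈ closedBall q (dist x q) :=
          (convex_closedBall q (dist x q)).segment_subset
            (mem_closedBall_self dist_nonneg) (mem_closedBall.mpr le_rfl) hz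
        rw [mem_closedBall, dist_eq_norm] at this
        rwa [dist_eq_norm] at this
      calc ‖fderiv ℝ g z - fderiv ℝ g q‖ ≤ (K : ℝ) * ‖z - q‖ := by
            have := hlip.dist_le_mul z (hball (hseg hz)) q (hball hqball)
            rwa [dist_eq_norm, dist_eq_norm] at this
        _ ≤ (K : ℝ) * ‖x - q‖ := by
            exact mul_le_mul_of_nonneg_left hz' K.coe_nonneg
    · exact convex_segment q x
    · exact left_mem_segment ℝ q x
    · exact right_mem_segment ℝ q x
  -- algebraic identity
  have hxq : x - q = (-s) • g q := by rw [hx]; module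
  have hid : (p - (b * h) • g x)
      - (p - (b * h) • g q + (2 * c * h ^ 3) • fderiv ℝ g q (g q))
      = (-(b * h)) • (g x - g q - fderiv ℝ g q (x - q)) := by
    have hbs : b * h * s = 2 * c * h ^ 3 := by
      rw [hs]; field_simp
    rw [hxq, map_smul, ← hbs]
    module
  rw [hid, norm_smul, norm_neg, Real.norm_eq_abs, abs_mul]
  calc |b| * |h| * ‖g x - g q - fderiv ℝ g q (x - q)‖
      ≤ |b| * |h| * ((K : ℝ) * ‖x - q‖ * ‖x - q‖) := by
        apply mul_le_mul_of_nonneg_left key (by positivity)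
    _ = |b| * (K : ℝ) * A ^ 2 * (|h| * h ^ 2 * h ^ 2) := by rw [hr]; ring
    _ = |b| * (K : ℝ) * A ^ 2 * |h| ^ 5 := by
        rw [← sq_abs h]; ring
    _ ≤ (|b| * (K : ℝ) * A ^ 2 + 1) * |h| ^ 5 := by
        apply mul_le_mul_of_nonneg_right (by linarith) (by positivity)
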